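/- Under assumption (H2), let λ > 0 and let K*_λ denote the formal adjoint of K − λ, namely K*_λ f = Δ_{ℝ^q} f − Σ_{k,j=1}^N b_{jk} x_k ∂_{x_j} f + ∂_t f − λ f. If f ∈ C^∞(ℝ^{N+1}) ∩ L^∞(ℝ^{N+1}) satisfies K*_λ f = 0 everywhere in ℝ^{N+1}, then f ≡ 0 in ℝ^{N+1}. -/

import Mathlib

open MeasureTheory Filter Topology
open scoped ENNReal NNReal

noncomputable section

namespace KFP

/-- The space `ℝ^{N+1} = ℝ^N_x × ℝ_t`. -/
abbrev Espace (N : ℕ) := (Fin N → ℝ) × ℝ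

/-- Partial sums `σ j = m 0 + … + m (j-1)` of the block sizes. -/
def psum (m : ℕ → ℕ) : ℕ → ℕ
  | 0 => 0
  | j + 1 => psum m j + m j

/-- The block level of the coordinate index `i`: the largest `j ≤ k` with `psum m j ≤ i`. -/
def lvl (k : ℕ) (m : ℕ → ℕ) (i : ℕ) : ℕ :=
  ((Finset.range (k + 1)).filter fun j => psum m j ≤ i).sup id

/-- The dilation exponent `q_i = 2 * (level of i) + 1`. -/
def qexp (k : ℕ) (m : ℕ → ℕ) (i : ℕ) : ℕ := 2 * lvl k m i + 1

/-- The homogeneous dimension `Q = q_1 + … + q_N`. -/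
def Qhom (k : ℕ) (m : ℕ → ℕ) (N : ℕ) : ℕ := ∑ i ∈ Finset.range N, qexp k m i

/-- The homogeneous norm `‖x‖ = Σ_i |x_i|^(1/q_i)` on `ℝ^N`. -/
def hnorm (k : ℕ) (m : ℕ → ℕ) {N : ℕ} (x : Fin N → ℝ) : ℝ :=
  ∑ i, |x i| ^ ((qexp k m (i : ℕ) : ℝ))⁻¹

/-- Assumption (H2): block subdiagonal structure of `B`, with blocks of full rank. -/
def IsH2 (N q k : ℕ) (m : ℕ → ℕ) (Bm : Matrix (Fin N) (Fin N) ℝ) : Prop :=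
  m 0 = q ∧ (∀ j ≤ k, 1 ≤ m j) ∧ (∀ j < k, m (j + 1) ≤ m j) ∧ psum m (k + 1) = N ∧
  (∀ i j : Fin N, Bm i j ≠ 0 → ∃ l < k,
      psum m (l + 1) ≤ (i : ℕ) ∧ (i : ℕ) < psum m (l + 2) ∧
      psum m l ≤ (j : ℕ) ∧ (j : ℕ) < psum m (l + 1)) ∧
  (∀ l < k,
    Matrix.rank (Matrix.of fun
        (a : {i : Fin N // psum m (l + 1) ≤ (i : ℕ) ∧ (i : ℕ) < psum m (l + 2)})
        (b : {j : Fin N // psum m l ≤ (j : ℕ) ∧ (j : ℕ) < psum m (l + 1)}) =>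
        Bm a.1 b.1) = m (l + 1))

/-- `E(t) = exp(-tB)`. -/
def Emat {N : ℕ} (Bm : Matrix (Fin N) (Fin N) ℝ) (t : ℝ) : Matrix (Fin N) (Fin N) ℝ :=
  NormedSpace.exp ((-t) • Bm)

/-- The quasidistance `d((x,t),(y,s)) = ‖x - E(t-s) y‖ + √|t-s|`. -/
def dK (k : ℕ) (m : ℕ → ℕ) {N : ℕ} (Bm : Matrix (Fin N) (Fin N) ℝ) (ξ η : Espace N) : ℝ :=
  hnorm k m (ξ.1 - (Emat Bm (ξ.2 - η.2)).mulVec η.1) + Real.sqrt |ξ.2 - η.2|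

/-- The `d`-ball `B_r(ξ) = {η : d(η,ξ) < r}`. -/
def ball (k : ℕ) (m : ℕ → ℕ) {N : ℕ} (Bm : Matrix (Fin N) (Fin N) ℝ)
    (ξ : Espace N) (r : ℝ) : Set (Espace N) :=
  {η | dK k m Bm η ξ < r}

/-- Average of `f` over the set `s` (w.r.t. Lebesgue measure). -/
def avg {N : ℕ} (s : Set (Espace N)) (f : Espace N → ℝ) : ℝ :=
  (1 / (volume s).toReal) * ∫ ξ in s, f ξ

/-- The (uncentered) Hardy-Littlewood maximal function. -/
def maxHL (k : ℕ) (m : ℕ → ℕ) {N : ℕ} (Bm : Matrix (Fin N) (Fin N) ℝ)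
    (f : Espace N → ℝ) (ξ : Espace N) : ℝ :=
  sSup {v | ∃ ζ r, 0 < r ∧ ξ ∈ ball k m Bm ζ r ∧ v = avg (ball k m Bm ζ r) fun η => |f η|}

/-- Partial (space-only) average `f(·,t)_B`. -/
def avgX {N : ℕ} (s : Set (Espace N)) (f : Espace N → ℝ) (t : ℝ) : ℝ :=
  (1 / (volume s).toReal) * ∫ η in s, f (η.1, t)

/-- The partial VMO modulus `η_f(r)`. -/
def vmoMod (k : ℕ) (m : ℕ → ℕ) {N : ℕ} (Bm : Matrix (Fin N) (Fin N) ℝ)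
    (f : Espace N → ℝ) (r : ℝ) : ℝ :=
  sSup {v | ∃ ξ₀ ρ, 0 < ρ ∧ ρ ≤ r ∧
    v = avg (ball k m Bm ξ₀ ρ) fun ξ => |f ξ - avgX (ball k m Bm ξ₀ ρ) f ξ.2|}

/-- `f ∈ VMO_x(ℝ^{N+1})`: the VMO modulus is bounded and vanishes at `0⁺`. -/
def IsVMOx (k : ℕ) (m : ℕ → ℕ) {N : ℕ} (Bm : Matrix (Fin N) (Fin N) ℝ)
    (f : Espace N → ℝ) : Prop :=
  BddAbove (Set.range (vmoMod k m Bm f)) ∧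
  Tendsto (vmoMod k m Bm f) (𝓝[>] 0) (𝓝 0)

/-- `a^♯(R) = max_{i,j} η_{a_{ij}}(R)`. -/
def aSharp (k : ℕ) (m : ℕ → ℕ) {N q : ℕ} (Bm : Matrix (Fin N) (Fin N) ℝ)
    (a : Fin q → Fin q → Espace N → ℝ) (R : ℝ) : ℝ :=
  sSup {v | ∃ i j, v = vmoMod k m Bm (a i j) R}

/-- Direction of the `i`-th spatial coordinate. -/
def eX {N : ℕ} (i : Fin N) : Espace N := (Pi.single i 1, 0)

/-- Classical partial derivative `∂_{x_i}`. -/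
def dX {N : ℕ} (i : Fin N) (F : Espace N → ℝ) (ξ : Espace N) : ℝ :=
  fderiv ℝ F ξ (eX i)

/-- Classical second derivative `∂²_{x_i x_j}`. -/
def d2X {N : ℕ} (i j : Fin N) (F : Espace N → ℝ) : Espace N → ℝ :=
  dX i (dX j F)

/-- The drift `Y F (x,t) = Σ_{j,k} b_{jk} x_k ∂_{x_j}F - ∂_t F`, i.e. the derivative of `F`
along the direction `(Bx, -1)`. -/
def Yop {N : ℕ} (Bm : Matrix (Fin N) (Fin N) ℝ) (F : Espace N → ℝ) (ξ : Espace N) : ℝ :=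
  fderiv ℝ F ξ (Bm.mulVec ξ.1, (-1 : ℝ))

/-- The KFP operator `L u = Σ a_{ij} ∂²_{x_i x_j} u + Y u` (classical derivatives). -/
def Lop {N q : ℕ} (hqN : q ≤ N) (Bm : Matrix (Fin N) (Fin N) ℝ)
    (a : Fin q → Fin q → Espace N → ℝ) (u : Espace N → ℝ) (ξ : Espace N) : ℝ :=
  (∑ i : Fin q, ∑ j : Fin q,
    a i j ξ * d2X (Fin.castLE hqN i) (Fin.castLE hqN j) u ξ) + Yop Bm u ξ

/-- The constant-coefficient Kolmogorov operator `K u = Δ_{ℝ^q} u + Y u`. -/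
def Kop {N q : ℕ} (hqN : q ≤ N) (Bm : Matrix (Fin N) (Fin N) ℝ)
    (u : Espace N → ℝ) (ξ : Espace N) : ℝ :=
  (∑ i : Fin q, d2X (Fin.castLE hqN i) (Fin.castLE hqN i) u ξ) + Yop Bm u ξ

/-- Assumption (H1): measurable, symmetric, uniformly elliptic (hence bounded) coefficients. -/
def IsH1 {N q : ℕ} (a : Fin q → Fin q → Espace N → ℝ) (ν : ℝ) : Prop :=
  (∀ i j, Measurable (a i j)) ∧ (∀ i j ξ, a i j ξ = a j i ξ) ∧
  (∃ C, ∀ i j, ∀ᵐ ξ ∂(volume : Measure (Espace N)), |a i j ξ| ≤ C) ∧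
  ∀ᵐ ξ ∂(volume : Measure (Espace N)), ∀ ζ : Fin q → ℝ,
    ν * ∑ i, ζ i ^ 2 ≤ ∑ i, ∑ j, a i j ξ * ζ i * ζ j ∧
    ∑ i, ∑ j, a i j ξ * ζ i * ζ j ≤ ν⁻¹ * ∑ i, ζ i ^ 2

/-- Assumption (H1) for coefficients depending only on time. -/
def IsH1t {q : ℕ} (a : Fin q → Fin q → ℝ → ℝ) (ν : ℝ) : Prop :=
  (∀ i j, Measurable (a i j)) ∧ (∀ i j t, a i j t = a j i t) ∧
  (∃ C, ∀ i j, ∀ᵐ t ∂(volume : Measure ℝ), |a i j t| ≤ C) ∧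
  ∀ᵐ t ∂(volume : Measure ℝ), ∀ ζ : Fin q → ℝ,
    ν * ∑ i, ζ i ^ 2 ≤ ∑ i, ∑ j, a i j t * ζ i * ζ j ∧
    ∑ i, ∑ j, a i j t * ζ i * ζ j ≤ ν⁻¹ * ∑ i, ζ i ^ 2

/-- Model operator `L̄ u = Σ a_{ij}(t) ∂²_{x_i x_j} u + Y u` with time-dependent coefficients. -/
def LbarOp {N q : ℕ} (hqN : q ≤ N) (Bm : Matrix (Fin N) (Fin N) ℝ)
    (a : Fin q → Fin q → ℝ → ℝ) (u : Espace N → ℝ) (ξ : Espace N) : ℝ :=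
  (∑ i : Fin q, ∑ j : Fin q,
    a i j ξ.2 * d2X (Fin.castLE hqN i) (Fin.castLE hqN j) u ξ) + Yop Bm u ξ

/-- A test function supported in `Ω`. -/
def IsTest {N : ℕ} (Ω : Set (Espace N)) (φ : Espace N → ℝ) : Prop :=
  ContDiff ℝ (⊤ : ℕ∞) φ ∧ HasCompactSupport φ ∧ tsupport φ ⊆ Ω

/-- `g` is the weak derivative `∂_{x_i} u` on `Ω`. -/
def HasWeakDX {N : ℕ} (Ω : Set (Espace N)) (i : Fin N) (u g : Espace N → ℝ) : Prop :=
  ∀ φ, IsTest Ω φ → ∫ ξ in Ω, u ξ * dX i φ ξ = -∫ ξ in Ω, g ξ * φ ξ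

/-- `g` is the weak derivative `∂²_{x_i x_j} u` on `Ω`. -/
def HasWeakD2X {N : ℕ} (Ω : Set (Espace N)) (i j : Fin N) (u g : Espace N → ℝ) : Prop :=
  ∀ φ, IsTest Ω φ → ∫ ξ in Ω, u ξ * d2X i j φ ξ = ∫ ξ in Ω, g ξ * φ ξ

/-- `g` is the weak drift derivative `Y u` on `Ω` (the vector field `Y` is divergence free). -/
def HasWeakY {N : ℕ} (Ω : Set (Espace N)) (Bm : Matrix (Fin N) (Fin N) ℝ)
    (u g : Espace N → ℝ) : Prop :=
  ∀ φ, IsTest Ω φ → ∫ ξ in Ω, u ξ * Yop Bm φ ξ = -∫ ξ in Ω, g ξ * φ ξ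

/-- Membership data for `u ∈ W_X^{2,p}(Ω)`: `ux i = ∂_{x_i}u`, `uxx i j = ∂²_{x_i x_j}u`,
`uY = Y u` in the weak sense, all belonging to `L^p(Ω)`. -/
def W2Data {N q : ℕ} (hqN : q ≤ N) (Bm : Matrix (Fin N) (Fin N) ℝ) (P : ℝ≥0∞)
    (Ω : Set (Espace N)) (u : Espace N → ℝ) (ux : Fin q → Espace N → ℝ)
    (uxx : Fin q → Fin q → Espace N → ℝ) (uY : Espace N → ℝ) : Prop :=
  MemLp u P (volume.restrict Ω) ∧
  (∀ i, MemLp (ux i) P (volume.restrict Ω)) ∧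
  (∀ i j, MemLp (uxx i j) P (volume.restrict Ω)) ∧
  MemLp uY P (volume.restrict Ω) ∧
  (∀ i, HasWeakDX Ω (Fin.castLE hqN i) u (ux i)) ∧
  (∀ i j, HasWeakD2X Ω (Fin.castLE hqN i) (Fin.castLE hqN j) u (uxx i j)) ∧
  HasWeakY Ω Bm u uY

/-- The norm `‖u‖_{W_X^{2,p}(Ω)}` computed from the weak derivative data. -/
def W2norm {N q : ℕ} (P : ℝ≥0∞) (Ω : Set (Espace N)) (u : Espace N → ℝ)
    (ux : Fin q → Espace N → ℝ) (uxx : Fin q → Fin q → Espace N → ℝ)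
    (uY : Espace N → ℝ) : ℝ≥0∞ :=
  eLpNorm u P (volume.restrict Ω) + (∑ i, eLpNorm (ux i) P (volume.restrict Ω)) +
  (∑ i, ∑ j, eLpNorm (uxx i j) P (volume.restrict Ω)) + eLpNorm uY P (volume.restrict Ω)

/-- `u ∈ W_X^{2,p}(Ω)`. -/
def MemW2p {N q : ℕ} (hqN : q ≤ N) (Bm : Matrix (Fin N) (Fin N) ℝ) (P : ℝ≥0∞)
    (Ω : Set (Espace N)) (u : Espace N → ℝ) : Prop :=
  ∃ ux uxx uY, W2Data hqN Bm P Ω u ux uxx uY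

/-- The strip `S_T = ℝ^N × (-∞, T)`, `T ∈ (-∞, +∞]`. -/
def strip (N : ℕ) (T : EReal) : Set (Espace N) := {ξ | (ξ.2 : EReal) < T}

/-- The strip `Ω_T = ℝ^N × (0, T)`. -/
def omegaT (N : ℕ) (T : ℝ) : Set (Espace N) := {ξ | 0 < ξ.2 ∧ ξ.2 < T}

/-- Extension of `u` by zero for `t ≤ 0`. -/
def extZero {N : ℕ} (u : Espace N → ℝ) : Espace N → ℝ :=
  fun ξ => if 0 < ξ.2 then u ξ else 0

end KFP
namespace KFP

/-- The `q×q` coefficient matrix `A₀(σ)` extended by zeros to an `N×N` matrix. -/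
def A0ext {N q : ℕ} (hqN : q ≤ N) (a : Fin q → Fin q → ℝ → ℝ) (σ : ℝ) :
    Matrix (Fin N) (Fin N) ℝ :=
  Matrix.of fun i j =>
    if h : (i : ℕ) < q ∧ (j : ℕ) < q then a ⟨i, h.1⟩ ⟨j, h.2⟩ σ else 0

/-- The matrix `C(t,s) = ∫_s^t E(t-σ) A₀(σ) E(t-σ)ᵀ dσ` (computed entrywise). -/
def Cmat {N q : ℕ} (hqN : q ≤ N) (Bm : Matrix (Fin N) (Fin N) ℝ)
    (a : Fin q → Fin q → ℝ → ℝ) (t s : ℝ) : Matrix (Fin N) (Fin N) ℝ :=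
  Matrix.of fun i j =>
    ∫ σ in s..t, (Emat Bm (t - σ) * A0ext hqN a σ * (Emat Bm (t - σ)).transpose) i j

/-- The fundamental solution `Γ(x,t;y,s)` of the model operator `L̄`. -/
def Gamma {N q : ℕ} (hqN : q ≤ N) (Bm : Matrix (Fin N) (Fin N) ℝ)
    (a : Fin q → Fin q → ℝ → ℝ) (ξ η : Espace N) : ℝ :=
  if η.2 < ξ.2 then
    (1 / ((4 * Real.pi) ^ ((N : ℝ) / 2) * Real.sqrt (Cmat hqN Bm a ξ.2 η.2).det)) *
      Real.exp (-(1 / 4) *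
        (∑ i, ((Cmat hqN Bm a ξ.2 η.2)⁻¹.mulVec
            (ξ.1 - (Emat Bm (ξ.2 - η.2)).mulVec η.1)) i *
          (ξ.1 - (Emat Bm (ξ.2 - η.2)).mulVec η.1) i))
  else 0

/-- The kernel `∂²_{x_i x_j}Γ(ξ;η)` (derivatives in the first variable). -/
def d2Gamma {N q : ℕ} (hqN : q ≤ N) (Bm : Matrix (Fin N) (Fin N) ℝ)
    (a : Fin q → Fin q → ℝ → ℝ) (i j : Fin q) (ξ η : Espace N) : ℝ :=
  d2X (Fin.castLE hqN i) (Fin.castLE hqN j) (fun ζ => Gamma hqN Bm a ζ η) ξ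

/-- The singular integral operator
`T_{ij}f(x,t) = ∫ ∂²_{x_ix_j}Γ(x,t;y,s) [f(E(s-t)x,s) - f(y,s)] dy ds`. -/
def Tij {N q : ℕ} (hqN : q ≤ N) (Bm : Matrix (Fin N) (Fin N) ℝ)
    (a : Fin q → Fin q → ℝ → ℝ) (i j : Fin q) (f : Espace N → ℝ) (ξ : Espace N) : ℝ :=
  ∫ η, d2Gamma hqN Bm a i j ξ η *
    (f ((Emat Bm (η.2 - ξ.2)).mulVec ξ.1, η.2) - f η)

/-- The truncated operator
`T_{ij}^ε f(x,t) = -∫ φ_ε(t-s) ∂²_{x_ix_j}Γ(x,t;y,s) f(y,s) dy ds`. -/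
def TijE {N q : ℕ} (hqN : q ≤ N) (Bm : Matrix (Fin N) (Fin N) ℝ)
    (a : Fin q → Fin q → ℝ → ℝ) (i j : Fin q) (φ : ℝ → ℝ) (f : Espace N → ℝ)
    (ξ : Espace N) : ℝ :=
  -∫ η, φ (ξ.2 - η.2) * d2Gamma hqN Bm a i j ξ η * f η

/-- The truncated kernel `K_{ij}^ε(ξ;η) = -φ_ε(t-s) ∂²_{x_ix_j}Γ(ξ;η)`. -/
def KijE {N q : ℕ} (hqN : q ≤ N) (Bm : Matrix (Fin N) (Fin N) ℝ)
    (a : Fin q → Fin q → ℝ → ℝ) (i j : Fin q) (φ : ℝ → ℝ) (ξ η : Espace N) : ℝ :=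
  -(φ (ξ.2 - η.2) * d2Gamma hqN Bm a i j ξ η)

/-- The properties of the cut-off function `φ_ε`. -/
def IsCutoff (c₀ ε : ℝ) (φ : ℝ → ℝ) : Prop :=
  ContDiff ℝ (⊤ : ℕ∞) φ ∧ (∀ z, 0 ≤ φ z ∧ φ z ≤ 1) ∧ (∀ z ≤ ε, φ z = 0) ∧
  (∀ z, 2 * ε ≤ z → φ z = 1) ∧ ∀ z, |deriv φ z| ≤ c₀ / ε

/-- The partial Hölder seminorm `|f|_{C_x^α}`: the least essential bound `H` with
`|f(x,t) - f(y,t)| ≤ H ‖x-y‖^α` for a.e. `t`. -/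
def holderXmod (k : ℕ) (m : ℕ → ℕ) {N : ℕ} (α : ℝ) (f : Espace N → ℝ) : ℝ :=
  sInf {H | 0 ≤ H ∧ ∀ᵐ t ∂(volume : Measure ℝ), ∀ x y : Fin N → ℝ,
    |f (x, t) - f (y, t)| ≤ H * hnorm k m (x - y) ^ α}

/-- `f ∈ D_x^α(ℝ^{N+1})`: bounded, compactly supported, with finite `C_x^α` seminorm. -/
def MemDxAlpha (k : ℕ) (m : ℕ → ℕ) {N : ℕ} (α : ℝ) (f : Espace N → ℝ) : Prop :=
  (∃ M, ∀ ξ, |f ξ| ≤ M) ∧ HasCompactSupport f ∧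
  {H | 0 ≤ H ∧ ∀ᵐ t ∂(volume : Measure ℝ), ∀ x y : Fin N → ℝ,
    |f (x, t) - f (y, t)| ≤ H * hnorm k m (x - y) ^ α}.Nonempty

/-- Iterated derivative `∂_{x_i}^n`. -/
def dXpow {N : ℕ} (i : Fin N) : ℕ → (Espace N → ℝ) → Espace N → ℝ
  | 0, F => F
  | n + 1, F => dX i (dXpow i n F)

/-- The multi-index derivative `D_x^ℓ = ∂_{x_1}^{ℓ_1} ⋯ ∂_{x_N}^{ℓ_N}`. -/
def DxMulti {N : ℕ} (ℓ : Fin N → ℕ) (F : Espace N → ℝ) : Espace N → ℝ :=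
  (List.finRange N).foldr (fun i G => dXpow i (ℓ i) G) F

/-- `‖u‖_{W_X^{1,p}(Ω)}` for classical derivatives. -/
def cW1norm {N q : ℕ} (hqN : q ≤ N) (P : ℝ≥0∞) (Ω : Set (Espace N))
    (u : Espace N → ℝ) : ℝ≥0∞ :=
  eLpNorm u P (volume.restrict Ω) +
    ∑ i : Fin q, eLpNorm (dX (Fin.castLE hqN i) u) P (volume.restrict Ω)

/-- `‖u‖_{W_X^{2,p}(Ω)}` for classical derivatives. -/
def cW2norm {N q : ℕ} (hqN : q ≤ N) (Bm : Matrix (Fin N) (Fin N) ℝ) (P : ℝ≥0∞)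
    (Ω : Set (Espace N)) (u : Espace N → ℝ) : ℝ≥0∞ :=
  cW1norm hqN P Ω u +
    (∑ i : Fin q, ∑ j : Fin q,
      eLpNorm (d2X (Fin.castLE hqN i) (Fin.castLE hqN j) u) P (volume.restrict Ω)) +
    eLpNorm (Yop Bm u) P (volume.restrict Ω)

end KFP

theorem sd_test {g g1 : ℝ → ℝ} {A : ℝ} (hmax : IsLocalMax g 0)
    (hg : ∀ s, HasDerivAt g (g1 s) s) (hg1 : HasDerivAt g1 A 0) : A ≤ 0 := by
  by_contra hA
  push_neg at hA
  have hg10 : g1 0 = 0 := by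
    have := hmax.deriv_eq_zero
    rwa [(hg 0).deriv] at this
  have hslope : Tendsto (slope g1 0) (𝓝[≠] 0) (𝓝 A) :=
    hasDerivAt_iff_tendsto_slope.1 hg1
  have hev : ∀ᶠ s in 𝓝[≠] (0:ℝ), 0 < slope g1 0 s :=
    hslope.eventually (eventually_gt_nhds hA)
  have hle : 𝓝[>] (0:ℝ) ≤ 𝓝[≠] (0:ℝ) := nhdsWithin_mono 0 fun s hs => ne_of_gt hs
  have hev' : ∀ᶠ s in 𝓝[>] (0:ℝ), 0 < g1 s := by
    filter_upwards [hev.filter_mono hle, self_mem_nhdsWithin] with s hs hs'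
    have : (0:ℝ) < s := hs'
    have := mul_pos hs this
    rwa [slope_def_field, hg10, sub_zero, sub_zero, div_mul_cancel₀] at this
    exact ne_of_gt ‹(0:ℝ) < s›
  have hmax' : ∀ᶠ s in 𝓝[>] (0:ℝ), g s ≤ g 0 :=
    hmax.filter_mono (nhdsWithin_le_nhds)
  -- extract an interval
  rcases (Metric.mem_nhdsWithin_iff).1 ((hev'.and hmax').filter_mono le_rfl) with ⟨δ, hδ, hsub⟩
  have hδ2 : (0:ℝ) < δ/2 := by linarith
  have hmono : StrictMonoOn g (Set.Icc 0 (δ/2)) := by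
    apply strictMonoOn_of_deriv_pos (convex_Icc _ _)
    · exact fun x _ => ((hg x).differentiableAt).continuousAt.continuousWithinAt
    · intro x hx
      rw [interior_Icc] at hx
      rw [(hg x).deriv]
      have hxm : x ∈ Metric.ball (0:ℝ) δ ∩ Set.Ioi 0 := by
        refine ⟨?_, hx.1⟩
        rw [Metric.mem_ball, Real.dist_eq, sub_zero, abs_of_pos hx.1]
        linarith [hx.2]
      exact (hsub hxm).1
  have h1 : g 0 < g (δ/2) := hmono (by simp [le_of_lt hδ2]) (by simp [le_of_lt hδ2]) hδ2
  have hmem : δ/2 ∈ Metric.ball (0:ℝ) δ ∩ Set.Ioi 0 := by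
    refine ⟨?_, ?_⟩
    · rw [Metric.mem_ball, Real.dist_eq, sub_zero, abs_of_pos hδ2]; linarith
    · exact hδ2
  exact absurd (hsub hmem).2 (not_le.2 h1)
section Aux
open KFP Filter Topology

variable {N : ℕ}

theorem dX_contDiff {F : Espace N → ℝ} (hF : ContDiff ℝ (⊤ : ℕ∞) F) (i : Fin N) :
    ContDiff ℝ (⊤ : ℕ∞) (dX i F) := by
  have h1 : ContDiff ℝ (⊤ : ℕ∞) (fderiv ℝ F) := hF.fderiv_right (by simp)
  exact (ContinuousLinearMap.apply ℝ ℝ (eX i)).contDiff.comp h1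

theorem dX_eq {F : Espace N → ℝ} {L : Espace N →L[ℝ] ℝ} {ξ : Espace N} (i : Fin N)
    (h : HasFDerivAt F L ξ) : dX i F ξ = L (eX i) := by
  rw [dX, h.fderiv]

end Aux
section Aux2
open KFP Filter Topology

variable {N : ℕ}

/-- `w ξ = 1 + |x|² + t²`. -/
def wfun (N : ℕ) : Espace N → ℝ := fun ξ => 1 + ((∑ i, ξ.1 i ^ 2) + ξ.2 ^ 2)

theorem wfun_pos (ξ : Espace N) : 0 < wfun N ξ := by
  have h1 : (0:ℝ) ≤ ∑ i, ξ.1 i ^ 2 := Finset.sum_nonneg fun i _ => sq_nonneg _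
  have h2 : (0:ℝ) ≤ ξ.2 ^ 2 := sq_nonneg _
  unfold wfun; linarith

theorem one_le_wfun (ξ : Espace N) : 1 ≤ wfun N ξ := by
  have h1 : (0:ℝ) ≤ ∑ i, ξ.1 i ^ 2 := Finset.sum_nonneg fun i _ => sq_nonneg _
  have h2 : (0:ℝ) ≤ ξ.2 ^ 2 := sq_nonneg _
  unfold wfun; linarith

/-- The derivative of `wfun` at `ξ`. -/
def Lw (ξ : Espace N) : Espace N →L[ℝ] ℝ :=
  (∑ j : Fin N, (2 * ξ.1 j) •
    ((ContinuousLinearMap.proj j).comp (ContinuousLinearMap.fst ℝ (Fin N → ℝ) ℝ))) +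
  (2 * ξ.2) • (ContinuousLinearMap.snd ℝ (Fin N → ℝ) ℝ)

theorem Lw_apply (ξ v : Espace N) :
    Lw ξ v = (∑ j, 2 * ξ.1 j * v.1 j) + 2 * ξ.2 * v.2 := by
  simp [Lw, mul_assoc]

theorem hasFDerivAt_wfun (ξ : Espace N) : HasFDerivAt (wfun N) (Lw ξ) ξ := by
  have h1 : ∀ j : Fin N, HasFDerivAt (fun ξ : Espace N => ξ.1 j ^ 2)
      ((2 * ξ.1 j) • ((ContinuousLinearMap.proj j).comp
        (ContinuousLinearMap.fst ℝ (Fin N → ℝ) ℝ))) ξ := by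
    intro j
    have hl : HasFDerivAt (fun ξ : Espace N => ξ.1 j)
        ((ContinuousLinearMap.proj j).comp (ContinuousLinearMap.fst ℝ (Fin N → ℝ) ℝ)) ξ :=
      ((ContinuousLinearMap.proj j).comp
        (ContinuousLinearMap.fst ℝ (Fin N → ℝ) ℝ)).hasFDerivAt
    have := hl.fun_mul hl
    have heq : (ξ.1 j) • ((ContinuousLinearMap.proj j).comp
        (ContinuousLinearMap.fst ℝ (Fin N → ℝ) ℝ)) + (ξ.1 j) • ((ContinuousLinearMap.proj j).comp
        (ContinuousLinearMap.fst ℝ (Fin N → ℝ) ℝ)) = (2 * ξ.1 j) • ((ContinuousLinearMap.proj j).comp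
        (ContinuousLinearMap.fst ℝ (Fin N → ℝ) ℝ)) := by
      rw [← add_smul]; ring_nf
    rw [← heq]
    simpa [pow_two] using this
  have h2 : HasFDerivAt (fun ξ : Espace N => ξ.2 ^ 2)
      ((2 * ξ.2) • (ContinuousLinearMap.snd ℝ (Fin N → ℝ) ℝ)) ξ := by
    have hl : HasFDerivAt (fun ξ : Espace N => ξ.2)
        (ContinuousLinearMap.snd ℝ (Fin N → ℝ) ℝ) ξ :=
      (ContinuousLinearMap.snd ℝ (Fin N → ℝ) ℝ).hasFDerivAt
    have := hl.fun_mul hl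
    have heq : ξ.2 • (ContinuousLinearMap.snd ℝ (Fin N → ℝ) ℝ) +
        ξ.2 • (ContinuousLinearMap.snd ℝ (Fin N → ℝ) ℝ) =
        (2 * ξ.2) • (ContinuousLinearMap.snd ℝ (Fin N → ℝ) ℝ) := by
      rw [← add_smul]; ring_nf
    rw [← heq]
    simpa [pow_two] using this
  have hsum : HasFDerivAt (fun ξ : Espace N => ∑ j, ξ.1 j ^ 2)
      (∑ j : Fin N, (2 * ξ.1 j) • ((ContinuousLinearMap.proj j).comp
        (ContinuousLinearMap.fst ℝ (Fin N → ℝ) ℝ))) ξ := by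
    exact HasFDerivAt.fun_sum fun j _ => h1 j
  have := ((hsum.add h2).const_add 1)
  exact this

/-- `φ = log w`. -/
def phim (N : ℕ) : Espace N → ℝ := fun ξ => Real.log (wfun N ξ)

theorem phim_nonneg (ξ : Espace N) : 0 ≤ phim N ξ :=
  Real.log_nonneg (one_le_wfun ξ)

theorem hasFDerivAt_phim (ξ : Espace N) :
    HasFDerivAt (phim N) ((wfun N ξ)⁻¹ • Lw ξ) ξ := by
  have h := (Real.hasDerivAt_log (ne_of_gt (wfun_pos ξ))).comp_hasFDerivAt ξ
    (hasFDerivAt_wfun ξ)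
  exact h

theorem contDiff_phim : ContDiff ℝ (⊤ : ℕ∞) (phim N) := by
  have hw : ContDiff ℝ (⊤ : ℕ∞) (wfun N) := by
    unfold wfun
    apply ContDiff.add contDiff_const
    apply ContDiff.add
    · exact ContDiff.sum fun j _ =>
        (((ContinuousLinearMap.proj j).comp
          (ContinuousLinearMap.fst ℝ (Fin N → ℝ) ℝ)).contDiff).pow 2
    · exact ((ContinuousLinearMap.snd ℝ (Fin N → ℝ) ℝ).contDiff).pow 2
  exact ContDiff.log hw fun ξ => ne_of_gt (wfun_pos ξ)

end Aux2
section Aux3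
open KFP Filter Topology

variable {N : ℕ}

theorem Lw_apply_eX (ξ : Espace N) (i : Fin N) : Lw ξ (eX i) = 2 * ξ.1 i := by
  rw [Lw_apply]
  simp [eX, Pi.single_apply, mul_ite, Finset.sum_ite_eq']

theorem dX_phim (i : Fin N) (ξ : Espace N) :
    dX i (phim N) ξ = 2 * ξ.1 i * (wfun N ξ)⁻¹ := by
  rw [dX_eq i (hasFDerivAt_phim ξ)]
  simp [Lw_apply_eX, mul_comm]

theorem d2X_phim_le (i : Fin N) (ξ : Espace N) : d2X i i (phim N) ξ ≤ 2 := by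
  have hfun : dX i (phim N) = fun ζ : Espace N => 2 * ζ.1 i * (wfun N ζ)⁻¹ :=
    funext fun ζ => dX_phim i ζ
  have hu : HasFDerivAt (fun ζ : Espace N => 2 * ζ.1 i)
      ((2:ℝ) • ((ContinuousLinearMap.proj i).comp
        (ContinuousLinearMap.fst ℝ (Fin N → ℝ) ℝ))) ξ :=
    (((ContinuousLinearMap.proj i).comp
      (ContinuousLinearMap.fst ℝ (Fin N → ℝ) ℝ)).hasFDerivAt).const_mul 2
  have hv : HasFDerivAt (fun ζ : Espace N => (wfun N ζ)⁻¹)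
      ((-(wfun N ξ ^ 2)⁻¹) • Lw ξ) ξ :=
    (hasDerivAt_inv (ne_of_gt (wfun_pos ξ))).comp_hasFDerivAt ξ (hasFDerivAt_wfun ξ)
  have hm := hu.fun_mul hv
  have heval : d2X i i (phim N) ξ =
      (2 * ξ.1 i) * (-(wfun N ξ ^ 2)⁻¹ * (2 * ξ.1 i)) + (wfun N ξ)⁻¹ * 2 := by
    rw [d2X, hfun, dX_eq i hm]
    simp only [ContinuousLinearMap.add_apply, ContinuousLinearMap.smul_apply,
      ContinuousLinearMap.coe_comp', Function.comp_apply, ContinuousLinearMap.coe_fst',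
      ContinuousLinearMap.proj_apply, smul_eq_mul, Lw_apply_eX]
    have : (eX (N := N) i).1 i = 1 := Pi.single_eq_same i 1
    rw [this]
    ring
  rw [heval]
  have hw1 : 1 ≤ wfun N ξ := one_le_wfun ξ
  have hwpos := wfun_pos (N := N) ξ
  have hinv : (wfun N ξ)⁻¹ ≤ 1 := inv_le_one_of_one_le₀ hw1
  have hneg : (2 * ξ.1 i) * (-(wfun N ξ ^ 2)⁻¹ * (2 * ξ.1 i)) ≤ 0 := by
    have h0 : (0:ℝ) ≤ (wfun N ξ ^ 2)⁻¹ := by positivity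
    nlinarith [sq_nonneg (2 * ξ.1 i)]
  have hinvpos : (0:ℝ) < (wfun N ξ)⁻¹ := by positivity
  nlinarith

theorem Yop_phim_bound (Bm : Matrix (Fin N) (Fin N) ℝ) (ξ : Espace N) :
    |Yop Bm (phim N) ξ| ≤ 2 * (∑ j, ∑ l, |Bm j l|) + 1 := by
  have hder : Yop Bm (phim N) ξ = (wfun N ξ)⁻¹ *
      ((∑ j, 2 * ξ.1 j * (Bm.mulVec ξ.1) j) + 2 * ξ.2 * (-1)) := by
    rw [Yop, (hasFDerivAt_phim ξ).fderiv]
    simp [Lw_apply, mul_comm]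
  set S : ℝ := ∑ i, ξ.1 i ^ 2 with hS
  have hSnn : 0 ≤ S := Finset.sum_nonneg fun i _ => sq_nonneg _
  have hsq_le : ∀ j : Fin N, ξ.1 j ^ 2 ≤ S := fun j =>
    Finset.single_le_sum (fun i _ => sq_nonneg (ξ.1 i)) (Finset.mem_univ j)
  set CB : ℝ := ∑ j, ∑ l, |Bm j l| with hCB
  have hCBnn : 0 ≤ CB := Finset.sum_nonneg fun j _ => Finset.sum_nonneg fun l _ => abs_nonneg _
  have hw := wfun_pos (N := N) ξ
  have hw1 : 1 ≤ wfun N ξ := one_le_wfun ξ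
  have hwinv : (0:ℝ) < (wfun N ξ)⁻¹ := by positivity
  have hprod_le : ∀ j l : Fin N, |ξ.1 j * ξ.1 l| ≤ S := by
    intro j l
    rw [abs_mul]
    nlinarith [hsq_le j, hsq_le l, sq_nonneg (|ξ.1 j| - |ξ.1 l|), abs_nonneg (ξ.1 j),
      abs_nonneg (ξ.1 l), sq_abs (ξ.1 j), sq_abs (ξ.1 l)]
  have h1 : ∀ j, |2 * ξ.1 j * (Bm.mulVec ξ.1) j| ≤ (∑ l, |Bm j l|) * (2 * S) := by
    intro j
    have : 2 * ξ.1 j * (Bm.mulVec ξ.1) j = ∑ l, 2 * (Bm j l * (ξ.1 j * ξ.1 l)) := by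
      rw [Matrix.mulVec, dotProduct, Finset.mul_sum]
      congr 1; funext l; ring
    rw [this]
    calc |∑ l, 2 * (Bm j l * (ξ.1 j * ξ.1 l))| ≤ ∑ l, |2 * (Bm j l * (ξ.1 j * ξ.1 l))| :=
          Finset.abs_sum_le_sum_abs _ _
      _ ≤ ∑ l, |Bm j l| * (2 * S) := by
          apply Finset.sum_le_sum
          intro l _
          rw [abs_mul, abs_mul, abs_two]
          have := hprod_le j l
          have := abs_nonneg (Bm j l)
          nlinarith [abs_nonneg (ξ.1 j * ξ.1 l)]
      _ = (∑ l, |Bm j l|) * (2 * S) := (Finset.sum_mul _ _ _).symm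
  have hquad : |∑ j, 2 * ξ.1 j * (Bm.mulVec ξ.1) j| ≤ CB * (2 * S) := by
    calc |∑ j, 2 * ξ.1 j * (Bm.mulVec ξ.1) j| ≤ ∑ j, |2 * ξ.1 j * (Bm.mulVec ξ.1) j| :=
          Finset.abs_sum_le_sum_abs _ _
      _ ≤ ∑ j, (∑ l, |Bm j l|) * (2 * S) := Finset.sum_le_sum fun j _ => h1 j
      _ = CB * (2 * S) := (Finset.sum_mul _ _ _).symm
  have hS_le : S ≤ wfun N ξ := by
    have : (0:ℝ) ≤ ξ.2 ^ 2 := sq_nonneg _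
    simp only [wfun, hS]; linarith
  have ht_le : |2 * ξ.2 * (-1)| ≤ wfun N ξ := by
    rw [abs_mul, abs_neg, abs_one, mul_one, abs_mul, abs_two]
    have h2 : 2 * |ξ.2| ≤ 1 + ξ.2 ^ 2 := by nlinarith [sq_nonneg (|ξ.2| - 1), sq_abs ξ.2]
    have h3 : (0:ℝ) ≤ S := hSnn
    simp only [wfun]; simp only [hS] at h3 ⊢; linarith
  rw [hder, abs_mul, abs_of_pos hwinv]
  have habs : |(∑ j, 2 * ξ.1 j * (Bm.mulVec ξ.1) j) + 2 * ξ.2 * (-1)| ≤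
      CB * (2 * S) + wfun N ξ := by
    calc |(∑ j, 2 * ξ.1 j * (Bm.mulVec ξ.1) j) + 2 * ξ.2 * (-1)| ≤
        |∑ j, 2 * ξ.1 j * (Bm.mulVec ξ.1) j| + |2 * ξ.2 * (-1)| := abs_add_le _ _
      _ ≤ CB * (2 * S) + wfun N ξ := add_le_add hquad ht_le
  calc (wfun N ξ)⁻¹ * |(∑ j, 2 * ξ.1 j * (Bm.mulVec ξ.1) j) + 2 * ξ.2 * (-1)| ≤
        (wfun N ξ)⁻¹ * (CB * (2 * S) + wfun N ξ) := by
          exact mul_le_mul_of_nonneg_left habs (le_of_lt hwinv)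
    _ ≤ 2 * CB + 1 := by
        rw [mul_add, mul_comm ((wfun N ξ)⁻¹), inv_mul_cancel₀ (ne_of_gt hw)]
        have : (wfun N ξ)⁻¹ * (CB * (2 * S)) ≤ 2 * CB := by
          rw [mul_comm ((wfun N ξ)⁻¹)]
          have hfrac : (wfun N ξ)⁻¹ * S ≤ 1 := by
            rw [← div_eq_inv_mul]
            exact div_le_one_of_le₀ hS_le (le_of_lt hw)
          nlinarith
        linarith
section Aux4
open KFP Filter Topology

variable {N : ℕ}

theorem hasDerivAt_line (ξs v : Espace N) (s : ℝ) :
    HasDerivAt (fun s : ℝ => ξs + s • v) v s := by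
  simpa using ((hasDerivAt_id s).smul_const v).const_add ξs

theorem d2X_nonpos_of_max {u : Espace N → ℝ} (hu : ContDiff ℝ (⊤ : ℕ∞) u) {ξs : Espace N}
    (hmax : ∀ ζ, u ζ ≤ u ξs) (i : Fin N) : d2X i i u ξs ≤ 0 := by
  set c : ℝ → Espace N := fun s => ξs + s • eX i with hc
  have hc0 : c 0 = ξs := by simp [hc]
  have hdu : Differentiable ℝ u := hu.differentiable (by simp)
  have hdux : Differentiable ℝ (dX i u) := (dX_contDiff hu i).differentiable (by simp)
  have hg : ∀ s, HasDerivAt (fun s => u (c s)) (dX i u (c s)) s := fun s =>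
    ((hdu (c s)).hasFDerivAt).comp_hasDerivAt s (hasDerivAt_line ξs (eX i) s)
  have hg1 : HasDerivAt (fun s => dX i u (c s)) (d2X i i u ξs) 0 := by
    have := ((hdux (c 0)).hasFDerivAt).comp_hasDerivAt 0 (hasDerivAt_line ξs (eX i) 0)
    rw [hc0] at this
    exact this
  have hlm : IsLocalMax (fun s => u (c s)) 0 := by
    apply Filter.Eventually.of_forall
    intro s
    simpa [hc0] using hmax (c s)
  exact sd_test hlm hg hg1

theorem dX_sub_const_mul {f g : Espace N → ℝ} (hf : Differentiable ℝ f)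
    (hg : Differentiable ℝ g) (ε : ℝ) (i : Fin N) :
    dX i (fun ξ => f ξ - ε * g ξ) = fun ξ => dX i f ξ - ε * dX i g ξ := by
  funext ξ
  have h1 : fderiv ℝ (fun ξ : Espace N => f ξ - ε * g ξ) ξ =
      fderiv ℝ f ξ - ε • fderiv ℝ g ξ := by
    rw [fderiv_fun_sub (hf ξ) ((hg ξ).const_mul ε), fderiv_const_mul (hg ξ)]
  simp [dX, h1]

theorem Yop_sub_const_mul {f g : Espace N → ℝ} (hf : Differentiable ℝ f)
    (hg : Differentiable ℝ g) (ε : ℝ) (Bm : Matrix (Fin N) (Fin N) ℝ) (ξ : Espace N) :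
    Yop Bm (fun ξ => f ξ - ε * g ξ) ξ = Yop Bm f ξ - ε * Yop Bm g ξ := by
  have h1 : fderiv ℝ (fun ξ : Espace N => f ξ - ε * g ξ) ξ =
      fderiv ℝ f ξ - ε • fderiv ℝ g ξ := by
    rw [fderiv_fun_sub (hf ξ) ((hg ξ).const_mul ε), fderiv_const_mul (hg ξ)]
  simp [Yop, h1]

theorem dX_neg (f : Espace N → ℝ) (i : Fin N) :
    dX i (fun ξ => -f ξ) = fun ξ => -dX i f ξ := by
  funext ξ
  simp [dX, fderiv_neg]

theorem d2X_neg (f : Espace N → ℝ) (i j : Fin N) (ξ : Espace N) :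
    d2X i j (fun ξ => -f ξ) ξ = -d2X i j f ξ := by
  rw [d2X, dX_neg, d2X]
  have : dX i (fun ξ => -(dX j f) ξ) = fun ξ => -dX i (dX j f) ξ := dX_neg (dX j f) i
  rw [this]

theorem Yop_neg (Bm : Matrix (Fin N) (Fin N) ℝ) (f : Espace N → ℝ) (ξ : Espace N) :
    Yop Bm (fun ξ => -f ξ) ξ = -Yop Bm f ξ := by
  simp [Yop, fderiv_neg]

end Aux4
section Main
open KFP Filter Topology

/-- One-sided Liouville bound: under the hypotheses, `f ≤ 0`. -/
theorem half_liouville {N q : ℕ} (hq : 1 ≤ q) (hqN : q ≤ N)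
    (Bm : Matrix (Fin N) (Fin N) ℝ) (lam : ℝ) (hlam : 0 < lam)
    (f : Espace N → ℝ) (hsmooth : ContDiff ℝ (⊤ : ℕ∞) f) (hbdd : ∃ M, ∀ ξ, |f ξ| ≤ M)
    (hker : ∀ ξ : Espace N,
      (∑ i : Fin q, d2X (Fin.castLE hqN i) (Fin.castLE hqN i) f ξ) -
        Yop Bm f ξ - lam * f ξ = 0) :
    ∀ ξ : Espace N, f ξ ≤ 0 := by
  obtain ⟨M, hM⟩ := hbdd
  set CB : ℝ := ∑ j, ∑ l, |Bm j l| with hCB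
  have hCBnn : 0 ≤ CB := Finset.sum_nonneg fun j _ => Finset.sum_nonneg fun l _ => abs_nonneg _
  set C : ℝ := 2 * q + (2 * CB + 1) with hC
  have hCpos : 0 < C := by
    have : (1:ℝ) ≤ (q:ℝ) := by exact_mod_cast hq
    rw [hC]; nlinarith
  have hdf : Differentiable ℝ f := hsmooth.differentiable (by simp)
  have hdφ : Differentiable ℝ (phim N) := contDiff_phim.differentiable (by simp)
  -- Step 1: the key estimate, for every ε > 0
  have key : ∀ ε : ℝ, 0 < ε → ∀ ξ0 : Espace N, f ξ0 ≤ ε * (C / lam + phim N ξ0) := by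
    intro ε hε ξ0
    set u : Espace N → ℝ := fun ξ => f ξ - ε * phim N ξ with hu
    have hu_cd : ContDiff ℝ (⊤ : ℕ∞) u := hsmooth.sub (contDiff_const.mul contDiff_phim)
    have hdu : Differentiable ℝ u := hu_cd.differentiable (by simp)
    set z0 : Espace N := 0 with hz0
    have hφz0 : phim N z0 = 0 := by
      simp [phim, wfun, hz0]
    -- the superlevel set is compact
    set K : Set (Espace N) := {ξ | u z0 ≤ u ξ} with hK
    have hWpos : (0:ℝ) < Real.exp ((M - u z0) / ε) := Real.exp_pos _
    set R : ℝ := Real.sqrt (Real.exp ((M - u z0) / ε)) with hR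
    have hKsub : K ⊆ Metric.closedBall 0 R := by
      intro ξ hξ
      have h1 : ε * phim N ξ ≤ M - u z0 := by
        have h2 : u z0 ≤ u ξ := hξ
        have h3 : f ξ ≤ M := (abs_le.1 (hM ξ)).2
        simp only [hu] at h2
        have h2' : u z0 = f z0 - ε * phim N z0 := rfl
        linarith [h2']
      have h4 : phim N ξ ≤ (M - u z0) / ε := by
        rw [le_div_iff₀ hε]; linarith [h1]
      have h5 : wfun N ξ ≤ Real.exp ((M - u z0) / ε) := by
        have := (Real.log_le_iff_le_exp (wfun_pos ξ)).1 h4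
        exact this
      have hx2 : ∀ i, ξ.1 i ^ 2 ≤ wfun N ξ := by
        intro i
        have h6 : ξ.1 i ^ 2 ≤ ∑ j, ξ.1 j ^ 2 :=
          Finset.single_le_sum (fun j _ => sq_nonneg (ξ.1 j)) (Finset.mem_univ i)
        have h7 : (0:ℝ) ≤ ξ.2 ^ 2 := sq_nonneg _
        simp only [wfun]; linarith
      have ht2 : ξ.2 ^ 2 ≤ wfun N ξ := by
        have h6 : (0:ℝ) ≤ ∑ j, ξ.1 j ^ 2 := Finset.sum_nonneg fun j _ => sq_nonneg _
        simp only [wfun]; linarith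
      have habs : ∀ a : ℝ, a ^ 2 ≤ wfun N ξ → |a| ≤ R := by
        intro a ha
        rw [hR]
        have : a ^ 2 ≤ Real.exp ((M - u z0) / ε) := le_trans ha h5
        calc |a| = Real.sqrt (a ^ 2) := (Real.sqrt_sq_eq_abs a).symm
          _ ≤ R := Real.sqrt_le_sqrt this
      rw [Metric.mem_closedBall, dist_zero_right]
      rw [Prod.norm_def]
      have hRnn : 0 ≤ R := Real.sqrt_nonneg _
      apply max_le
      · rw [pi_norm_le_iff_of_nonneg hRnn]
        intro i
        rw [Real.norm_eq_abs]
        exact habs _ (hx2 i)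
      · rw [Real.norm_eq_abs]
        exact habs _ ht2
    have hKclosed : IsClosed K :=
      isClosed_le continuous_const (hu_cd.continuous)
    have hKcpt : IsCompact K :=
      Metric.isCompact_of_isClosed_isBounded hKclosed
        ((Metric.isBounded_closedBall).subset hKsub)
    have hKne : K.Nonempty := ⟨z0, show u z0 ≤ u z0 from le_rfl⟩
    obtain ⟨ξs, hξsK, hmaxK⟩ := hKcpt.exists_isMaxOn hKne (hu_cd.continuous.continuousOn)
    have hglob : ∀ ζ, u ζ ≤ u ξs := by
      intro ζ
      by_cases hζ : ζ ∈ K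
      · exact hmaxK hζ
      · have h1 : u ζ ≤ u z0 := le_of_not_ge hζ
        exact le_trans h1 (hmaxK (show u z0 ≤ u z0 from le_rfl))
    -- first derivative vanishes
    have hloc : IsLocalMax u ξs := Filter.Eventually.of_forall hglob
    have hfd0 : fderiv ℝ u ξs = 0 := hloc.fderiv_eq_zero
    have hfd : fderiv ℝ f ξs = ε • fderiv ℝ (phim N) ξs := by
      have h1 : fderiv ℝ u ξs = fderiv ℝ f ξs - ε • fderiv ℝ (phim N) ξs := by
        rw [hu]
        rw [fderiv_fun_sub (hdf ξs) ((hdφ ξs).const_mul ε), fderiv_const_mul (hdφ ξs)]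
      rw [h1] at hfd0
      have := sub_eq_zero.1 hfd0
      exact this
    have hYf : Yop Bm f ξs = ε * Yop Bm (phim N) ξs := by
      simp [Yop, hfd]
    -- second derivatives
    have hd2 : ∀ i : Fin N, d2X i i f ξs ≤ ε * d2X i i (phim N) ξs := by
      intro i
      have h0 : d2X i i u ξs ≤ 0 := d2X_nonpos_of_max hu_cd hglob i
      have heq : d2X i i u ξs = d2X i i f ξs - ε * d2X i i (phim N) ξs := by
        have h1 : dX i u = fun ξ => dX i f ξ - ε * dX i (phim N) ξ :=
          dX_sub_const_mul hdf hdφ ε i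
        rw [d2X, h1]
        have h2 := dX_sub_const_mul (f := dX i f) (g := dX i (phim N))
          ((dX_contDiff hsmooth i).differentiable (by simp))
          ((dX_contDiff contDiff_phim i).differentiable (by simp)) ε i
        rw [h2, d2X, d2X]
      linarith [heq ▸ h0]
    -- combine with the equation at ξs
    have hsum : (∑ i : Fin q, d2X (Fin.castLE hqN i) (Fin.castLE hqN i) f ξs) ≤
        ε * (2 * q) := by
      calc (∑ i : Fin q, d2X (Fin.castLE hqN i) (Fin.castLE hqN i) f ξs) ≤
          ∑ i : Fin q, ε * 2 := by
            apply Finset.sum_le_sum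
            intro i _
            calc d2X (Fin.castLE hqN i) (Fin.castLE hqN i) f ξs ≤
                ε * d2X (Fin.castLE hqN i) (Fin.castLE hqN i) (phim N) ξs := hd2 _
              _ ≤ ε * 2 := by
                  exact mul_le_mul_of_nonneg_left (d2X_phim_le _ ξs) (le_of_lt hε)
        _ = ε * (2 * q) := by
            rw [Finset.sum_const, Finset.card_univ, Fintype.card_fin]
            ring
    have hY : -Yop Bm f ξs ≤ ε * (2 * CB + 1) := by
      rw [hYf]
      have h1 : |Yop Bm (phim N) ξs| ≤ 2 * CB + 1 := Yop_phim_bound Bm ξs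
      have h2 : -Yop Bm (phim N) ξs ≤ 2 * CB + 1 := by
        have := neg_abs_le (Yop Bm (phim N) ξs)
        linarith [abs_le.1 h1]
      calc -(ε * Yop Bm (phim N) ξs) = ε * (-Yop Bm (phim N) ξs) := by ring
        _ ≤ ε * (2 * CB + 1) := mul_le_mul_of_nonneg_left h2 (le_of_lt hε)
    have hfs : lam * f ξs ≤ ε * C := by
      have heq := hker ξs
      have : lam * f ξs = (∑ i : Fin q, d2X (Fin.castLE hqN i) (Fin.castLE hqN i) f ξs) -
          Yop Bm f ξs := by linarith
      rw [this, hC]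
      calc (∑ i : Fin q, d2X (Fin.castLE hqN i) (Fin.castLE hqN i) f ξs) - Yop Bm f ξs ≤
          ε * (2 * q) + ε * (2 * CB + 1) := by linarith
        _ = ε * (2 * ↑q + (2 * CB + 1)) := by ring
    have hfs' : f ξs ≤ ε * C / lam := by
      rw [le_div_iff₀ hlam]; linarith [hfs]
    -- conclude for ξ0
    have h1 : u ξ0 ≤ u ξs := hglob ξ0
    have h2 : u ξs ≤ f ξs := by
      simp only [hu]
      have := phim_nonneg (N := N) ξs
      nlinarith
    simp only [hu] at h1
    have h4 : u ξs = f ξs - ε * phim N ξs := rfl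
    have h3 : f ξ0 ≤ ε * C / lam + ε * phim N ξ0 := by linarith [h4, h2]
    calc f ξ0 ≤ ε * C / lam + ε * phim N ξ0 := h3
      _ = ε * (C / lam + phim N ξ0) := by ring
  -- Step 2: let ε → 0
  intro ξ0
  by_contra hpos
  push_neg at hpos
  set K0 : ℝ := C / lam + phim N ξ0 with hK0
  have hK0pos : 0 < K0 := by
    have h1 : 0 < C / lam := div_pos hCpos hlam
    have h2 : 0 ≤ phim N ξ0 := phim_nonneg ξ0
    rw [hK0]; linarith
  have hε : 0 < f ξ0 / (2 * K0) := by positivity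
  have := key _ hε ξ0
  rw [div_mul_eq_mul_div, mul_comm] at this
  have : f ξ0 ≤ f ξ0 / 2 := by
    calc f ξ0 ≤ K0 * f ξ0 / (2 * K0) := this
      _ = f ξ0 / 2 := by field_simp
  linarith

end Main
open KFP in
/-- Proposition 5.5, Liouville-type property: under (H2), if `λ > 0`
and `f ∈ C^∞(ℝ^{N+1}) ∩ L^∞(ℝ^{N+1})` satisfies
`K*_λ f = Δ_{ℝ^q}f - Σ b_{jk}x_k ∂_{x_j}f + ∂_t f - λ f = 0` everywhere, then `f ≡ 0`. -/
theorem statement_15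
    (N q k : ℕ) (m : ℕ → ℕ) (hq : 1 ≤ q) (hqN : q ≤ N)
    (Bm : Matrix (Fin N) (Fin N) ℝ) (hH2 : IsH2 N q k m Bm)
    (lam : ℝ) (hlam : 0 < lam)
    (f : Espace N → ℝ) (hsmooth : ContDiff ℝ (⊤ : ℕ∞) f) (hbdd : ∃ M, ∀ ξ, |f ξ| ≤ M)
    (hker : ∀ ξ : Espace N,
      (∑ i : Fin q, d2X (Fin.castLE hqN i) (Fin.castLE hqN i) f ξ) -
        Yop Bm f ξ - lam * f ξ = 0) :
    ∀ ξ : Espace N, f ξ = 0 := by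
  intro ξ
  have hle : f ξ ≤ 0 := half_liouville hq hqN Bm lam hlam f hsmooth hbdd hker ξ
  have hge : -f ξ ≤ 0 := by
    obtain ⟨M, hM⟩ := hbdd
    refine half_liouville hq hqN Bm lam hlam (fun ξ => -f ξ) hsmooth.neg
      ⟨M, fun ζ => by rw [abs_neg]; exact hM ζ⟩ ?_ ξ
    intro ζ
    have h1 : ∀ i : Fin q, d2X (Fin.castLE hqN i) (Fin.castLE hqN i) (fun ξ => -f ξ) ζ =
        -d2X (Fin.castLE hqN i) (Fin.castLE hqN i) f ζ := fun i => d2X_neg f _ _ ζ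
    have h2 := Yop_neg Bm f ζ
    have h3 := hker ζ
    simp only [h1, h2, Finset.sum_neg_distrib]
    linarith [h3]
  linarith
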